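/- arXiv:1207.2434 — 3 statements merged into one kernel-verified Lean document; each statement's English description precedes it below -/
import Mathlib

section
/- The bottom-right entry of the Bezout matrix of P and Q satisfies b_{nn} = p_n²·Σ_{i=1}^n Q(x_i)/P'(x_i), when P has simple roots x_1, …, x_n. -/
/-!
Comparing the coefficients of `x ^ n` in `(x - y) B(x, y) = P(x) Q(y) - P(y) Q(x)` shows that
the last row of the Bezout matrix is the polynomial `p_n Q - q_n P`, of degree `< n`. Its
coefficient of `y ^ (n - 1)` is read off by Lagrange interpolation at the roots `x_i` of `P`,
where it takes the values `p_n Q(x_i)`; finally `P'(x_i) = p_n ∏_{j ≠ i} (x_i - x_j)`.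
-/

open Polynomial

/-- The quotient polynomial `(P(x)Q(y) - P(y)Q(x))/(x - y)` in `R[y][x]`. -/
noncomputable def bezPoly {R : Type*} [CommRing R] (P Q : R[X]) :
    Polynomial (Polynomial R) :=
  (P.map C * C Q - C P * Q.map C) /ₘ (X - C X)

/-- The `n × n` Bezout matrix: `bezMat n P Q i j` is the coefficient of
`x^i y^j` in `(P(x)Q(y) - P(y)Q(x))/(x - y)` (`0`-based indexing, so it is
the entry `b_{i+1, j+1}` of the paper). -/
noncomputable def bezMat {R : Type*} [CommRing R] (n : ℕ) (P Q : R[X]) :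
    Matrix (Fin n) (Fin n) R :=
  fun i j => ((bezPoly P Q).coeff i).coeff j

section Bezout

variable {R : Type*} [CommRing R] (P Q : R[X])

theorem X_sub_C_X_mul_bezPoly :
    (X - C X) * bezPoly P Q = P.map C * C Q - C P * Q.map C := by
  have hroot : (P.map C * C Q - C P * Q.map C).eval X = 0 := by
    simp [eval_map, eval₂_C_X, mul_comm]
  have h := modByMonic_add_div (P.map C * C Q - C P * Q.map C) (X - C X)
  rwa [modByMonic_X_sub_C_eq_C_eval, hroot, C_0, zero_add] at h

variable {P Q} {m : ℕ}

theorem natDegree_bezPoly_le (hP : P.natDegree ≤ m + 1) (hQ : Q.natDegree ≤ m + 1) :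
    (bezPoly P Q).natDegree ≤ m := by
  nontriviality R
  have hF : (P.map C * C Q - C P * Q.map C).natDegree ≤ m + 1 := by
    refine (natDegree_sub_le _ _).trans (max_le ?_ ?_)
    · exact (natDegree_mul_C_le _ _).trans (natDegree_map_le.trans hP)
    · exact (natDegree_C_mul_le _ _).trans (natDegree_map_le.trans hQ)
  rw [bezPoly, natDegree_divByMonic _ (monic_X_sub_C X), natDegree_X_sub_C]
  omega

theorem coeff_bezPoly_of_natDegree_le (hP : P.natDegree ≤ m + 1) (hQ : Q.natDegree ≤ m + 1) :
    (bezPoly P Q).coeff m = C (P.coeff (m + 1)) * Q - C (Q.coeff (m + 1)) * P := by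
  have htop : (bezPoly P Q).coeff (m + 1) = 0 :=
    coeff_eq_zero_of_natDegree_lt ((natDegree_bezPoly_le hP hQ).trans_lt m.lt_succ_self)
  have h := congrArg (coeff · (m + 1)) (X_sub_C_X_mul_bezPoly P Q)
  simp only [coeff_X_sub_C_mul, htop, mul_zero, sub_zero, coeff_sub, coeff_mul_C,
    coeff_C_mul, coeff_map] at h
  rw [h, mul_comm P]

theorem degree_C_coeff_mul_sub_lt {n : ℕ} (hP : P.natDegree ≤ n) (hQ : Q.natDegree ≤ n) :
    (C (P.coeff n) * Q - C (Q.coeff n) * P).degree < n := by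
  rw [degree_lt_iff_coeff_zero]
  intro k hk
  rcases (Nat.cast_le.mp hk).eq_or_lt with rfl | hlt
  · simp only [coeff_sub, coeff_C_mul]
    ring
  · simp [coeff_eq_zero_of_natDegree_lt (hP.trans_lt hlt),
      coeff_eq_zero_of_natDegree_lt (hQ.trans_lt hlt)]

end Bezout

section Interpolation

variable {F ι : Type*} [Field F] [DecidableEq ι] {s : Finset ι} {v : ι → F}

theorem coeff_coeff_bezPoly_eq_sum {m : ℕ} {P Q : F[X]} (hvs : Set.InjOn v s)
    (hs : s.card = m + 1) (hP : P.natDegree ≤ m + 1) (hQ : Q.natDegree ≤ m + 1)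
    (hroots : ∀ i ∈ s, P.eval (v i) = 0) :
    ((bezPoly P Q).coeff m).coeff m =
      P.coeff (m + 1) * ∑ i ∈ s, Q.eval (v i) / ∏ j ∈ s.erase i, (v i - v j) := by
  have hinterp := Lagrange.coeff_eq_sum hvs (hs ▸ degree_C_coeff_mul_sub_lt hP hQ)
  rw [hs, Nat.add_sub_cancel] at hinterp
  rw [coeff_bezPoly_of_natDegree_le hP hQ, hinterp, Finset.mul_sum]
  refine Finset.sum_congr rfl fun i hi => ?_
  simp only [eval_sub, eval_mul, eval_C, hroots i hi, mul_zero, sub_zero, mul_div_assoc]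

theorem eval_derivative_C_mul_nodal {i : ι} (hi : i ∈ s) (p : F) :
    (derivative (C p * Lagrange.nodal s v)).eval (v i) = p * ∏ j ∈ s.erase i, (v i - v j) := by
  rw [derivative_C_mul, eval_mul, eval_C, Lagrange.eval_nodal_derivative_eval_node_eq hi,
    Lagrange.eval_nodal]

end Interpolation

/-- For `P(x) = p_n (x-x_1)⋯(x-x_n)` with distinct roots,
`b_{nn} = p_n² Σ_i Q(x_i)/P'(x_i)`. -/
theorem bezMat_corner_eq_sum (n : ℕ) (hn : 0 < n) (p : ℝ)
    (x : Fin n → ℝ) (hx : Function.Injective x)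
    (P Q : ℝ[X]) (hP : P = C p * ∏ i, (X - C (x i))) (hQ : Q.degree ≤ n) :
    bezMat n P Q ⟨n - 1, by omega⟩ ⟨n - 1, by omega⟩ =
      p ^ 2 * ∑ i, Q.eval (x i) / (Polynomial.derivative P).eval (x i) := by
  obtain ⟨m, rfl⟩ : ∃ m, n = m + 1 := ⟨n - 1, (Nat.succ_pred_eq_of_pos hn).symm⟩
  change P = C p * Lagrange.nodal Finset.univ x at hP
  have hnodal : (Lagrange.nodal Finset.univ x).natDegree = m + 1 := by
    simp [Lagrange.natDegree_nodal]
  have hPtop : P.coeff (m + 1) = p := by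
    have htop := (Lagrange.nodal_monic (s := Finset.univ) (v := x)).coeff_natDegree
    rw [hnodal] at htop
    rw [hP, coeff_C_mul, htop, mul_one]
  have hroots (i : Fin (m + 1)) (_ : i ∈ Finset.univ) : P.eval (x i) = 0 := by
    rw [hP, eval_mul, Lagrange.eval_nodal_at_node (Finset.mem_univ i), mul_zero]
  change ((bezPoly P Q).coeff m).coeff m = _
  rw [coeff_coeff_bezPoly_eq_sum hx.injOn (by simp)
    (hP ▸ (natDegree_C_mul_le _ _).trans hnodal.le) (natDegree_le_iff_degree_le.mpr hQ) hroots,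
    hPtop, Finset.mul_sum, Finset.mul_sum]
  refine Finset.sum_congr rfl fun i _ => ?_
  rw [hP, eval_derivative_C_mul_nodal (Finset.mem_univ i), div_mul_eq_div_div_swap, sq,
    div_eq_mul_inv _ p, mul_comm _ p⁻¹, ← mul_assoc, mul_self_mul_inv]
end

section
/- Main theorem (case n = 2): Let x₁ ≠ x₂ be reals, P(x) = p₂(x − x₁)(x − x₂) with p₂ ≠ 0, and Q a polynomial of degree at most 2. Let B = B(P,Q) and let Δ(Q) be the 2×2 matrix [[0, Q(x₂)], [Q(x₁), Q[x₁,x₂]]]. Then det(b_{ij})_{i,j=2}^2 = p₂·Q[x₁,x₂] and det B = p₂²·det Δ(Q) = −p₂²·Q(x₁)Q(x₂). -/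
/-! For quadratic `P` and `Q` the division by `x - y` is exact and explicit, so the entries of
`B(P,Q)` are the `2 × 2` minors of the coefficient rows of `P` and `Q`. Substituting
`p₁ = -p₂(x₁ + x₂)`, `p₀ = p₂x₁x₂` and `Q[x₁,x₂] = q₁ + q₂(x₁ + x₂)`, both claims become
polynomial identities in the coefficients. -/

open Polynomial

theorem bezPoly_quadratic {R : Type*} [CommRing R] (p₂ p₁ p₀ q₂ q₁ q₀ : R) :
    bezPoly (C p₂ * X ^ 2 + C p₁ * X + C p₀) (C q₂ * X ^ 2 + C q₁ * X + C q₀) =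
      C (C (p₁ * q₀ - p₀ * q₁) + C (p₂ * q₀ - p₀ * q₂) * X) +
        C (C (p₂ * q₀ - p₀ * q₂) + C (p₂ * q₁ - p₁ * q₂) * X) * X := by
  refine Eq.trans ?_ (mul_divByMonic_cancel_left _ (monic_X_sub_C (X : R[X])))
  rw [bezPoly]
  congr 1
  simp only [Polynomial.map_add, Polynomial.map_mul, Polynomial.map_pow, map_C, map_X,
    map_sub, map_add, map_mul, map_pow]
  ring

theorem bezMat_two_quadratic {R : Type*} [CommRing R] (p₂ p₁ p₀ q₂ q₁ q₀ : R) :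
    bezMat 2 (C p₂ * X ^ 2 + C p₁ * X + C p₀) (C q₂ * X ^ 2 + C q₁ * X + C q₀) =
      !![p₁ * q₀ - p₀ * q₁, p₂ * q₀ - p₀ * q₂; p₂ * q₀ - p₀ * q₂, p₂ * q₁ - p₁ * q₂] := by
  ext i j
  fin_cases i <;> fin_cases j <;> simp [bezMat, bezPoly_quadratic]

theorem eval_quadratic_sub_eval_div_sub {K : Type*} [Field K] {x₁ x₂ : K} (hx : x₁ ≠ x₂)
    (q₂ q₁ q₀ : K) :
    ((C q₂ * X ^ 2 + C q₁ * X + C q₀).eval x₂ - (C q₂ * X ^ 2 + C q₁ * X + C q₀).eval x₁) /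
        (x₂ - x₁) = q₁ + q₂ * (x₁ + x₂) := by
  have hx' : x₂ - x₁ ≠ 0 := sub_ne_zero.mpr hx.symm
  simp only [eval_add, eval_mul, eval_C, eval_X, eval_pow]
  field_simp
  ring

theorem bezMat_main_two_general (p₂ x₁ x₂ : ℝ) (hx : x₁ ≠ x₂)
    (P Q : ℝ[X]) (hP : P = C p₂ * ((X - C x₁) * (X - C x₂)))
    (hQ : Q.degree ≤ 2) :
    bezMat 2 P Q 1 1 = p₂ * ((Q.eval x₂ - Q.eval x₁) / (x₂ - x₁)) ∧
      (bezMat 2 P Q).det =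
        p₂ ^ 2 *
          Matrix.det !![0, Q.eval x₂;
            Q.eval x₁, (Q.eval x₂ - Q.eval x₁) / (x₂ - x₁)] ∧
      (bezMat 2 P Q).det = -(p₂ ^ 2 * (Q.eval x₁ * Q.eval x₂)) := by
  have hP' : P = C p₂ * X ^ 2 + C (-(p₂ * (x₁ + x₂))) * X + C (p₂ * x₁ * x₂) := by
    rw [hP]
    simp only [map_mul, map_neg, map_add]
    ring
  rw [eq_quadratic_of_degree_le_two hQ, hP', bezMat_two_quadratic,
    eval_quadratic_sub_eval_div_sub hx]
  simp only [Matrix.det_fin_two_of, Matrix.of_apply, Matrix.cons_val', Matrix.cons_val_one,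
    Matrix.cons_val_zero, eval_add, eval_mul, eval_C, eval_X, eval_pow]
  exact ⟨by ring, by ring, by ring⟩

/-- Main theorem, case `n = 2`: with `P(x) = p₂(x - x₁)(x - x₂)`, `p₂ ≠ 0`,
`x₁ ≠ x₂`, and `Q` of degree ≤ 2, the principal minors of `B(P,Q)` counted
from the lower-right corner satisfy `b₂₂ = p₂·Q[x₁,x₂]` and
`det B = p₂²·det Δ(Q) = -p₂²·Q(x₁)Q(x₂)`, where
`Δ(Q) = [[0, Q(x₂)], [Q(x₁), Q[x₁,x₂]]]`. -/
theorem bezMat_main_two (p₂ x₁ x₂ : ℝ) (hp : p₂ ≠ 0) (hx : x₁ ≠ x₂)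
    (P Q : ℝ[X]) (hP : P = C p₂ * ((X - C x₁) * (X - C x₂)))
    (hQ : Q.degree ≤ 2) :
    bezMat 2 P Q 1 1 = p₂ * ((Q.eval x₂ - Q.eval x₁) / (x₂ - x₁)) ∧
      (bezMat 2 P Q).det =
        p₂ ^ 2 *
          Matrix.det !![0, Q.eval x₂;
            Q.eval x₁, (Q.eval x₂ - Q.eval x₁) / (x₂ - x₁)] ∧
      (bezMat 2 P Q).det = -(p₂ ^ 2 * (Q.eval x₁ * Q.eval x₂)) :=
  bezMat_main_two_general p₂ x₁ x₂ hx P Q hP hQ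
end

section
/- Main theorem (case n = 3, k = 0, simple roots): Let x₁, x₂, x₃ be distinct reals, P(x) = (x−x₁)(x−x₂)(x−x₃), and Q a real polynomial of degree at most 3. Then det B(P,Q) = det Δ(Q), where Δ(Q) is the 3×3 matrix with Δ_{ij} = 0 if i+j < 4 and Δ_{ij} = Q[x_{4−i},…,x_j] if i+j ≥ 4 (divided difference over the consecutive nodes x_{4−i},…,x_j); hence, expanding the antitriangular determinant, det B(P,Q) = −Q(x₁)·Q(x₂)·Q(x₃). -/
open Polynomial

/-- Divided differences of a function at a list of nodes, defined recursively:
`dd f [x] = f x` and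
`dd f [x₁,…,x_k] = (dd f [x₂,…,x_k] - dd f [x₁,…,x_{k-1}]) / (x_k - x₁)`. -/
noncomputable def dd (f : ℝ → ℝ) : List ℝ → ℝ
  | [] => 0
  | [x] => f x
  | x :: y :: t =>
      (dd f (y :: t) - dd f (x :: (y :: t).dropLast)) /
        ((y :: t).getLast (List.cons_ne_nil _ _) - x)
termination_by l => l.length
decreasing_by all_goals simp [List.length_dropLast]

/-- Main theorem, case `n = 3`, `k = 0`, simple roots: for
`P(x) = (x-x₁)(x-x₂)(x-x₃)` with distinct roots and `Q` of degree ≤ 3,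
`det B(P,Q) = det Δ(Q)` where `Δ(Q)` is the antitriangular matrix of divided
differences (`Δ_{ij} = Q[x_{4-i},…,x_j]` for `i + j ≥ 4`, `0` otherwise), and
hence `det B(P,Q) = -Q(x₁)Q(x₂)Q(x₃)`. -/
theorem bezMat_main_three (x₁ x₂ x₃ : ℝ)
    (h12 : x₁ ≠ x₂) (h13 : x₁ ≠ x₃) (h23 : x₂ ≠ x₃)
    (P Q : ℝ[X]) (hP : P = (X - C x₁) * (X - C x₂) * (X - C x₃))
    (hQ : Q.degree ≤ 3) :
    (bezMat 3 P Q).det =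
        Matrix.det
          !![0, 0, dd (fun t => Q.eval t) [x₃];
             0, dd (fun t => Q.eval t) [x₂], dd (fun t => Q.eval t) [x₂, x₃];
             dd (fun t => Q.eval t) [x₁], dd (fun t => Q.eval t) [x₁, x₂],
               dd (fun t => Q.eval t) [x₁, x₂, x₃]] ∧
      (bezMat 3 P Q).det = -(Q.eval x₁ * Q.eval x₂ * Q.eval x₃) := by
  have hQ3 : Q.natDegree < 4 := by
    have h : Q.natDegree ≤ 3 :=
      Polynomial.natDegree_le_iff_degree_le.mpr (by exact_mod_cast hQ)
    omega
  set q0 := Q.coeff 0 with hq0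
  set q1 := Q.coeff 1 with hq1
  set q2 := Q.coeff 2 with hq2
  set q3 := Q.coeff 3 with hq3
  have hQd : Q = C q0 + C q1 * X + C q2 * X ^ 2 + C q3 * X ^ 3 := by
    conv_lhs => rw [Q.as_sum_range' 4 hQ3]
    simp [Finset.sum_range_succ, ← C_mul_X_pow_eq_monomial]
    rfl
  -- coefficients of P
  set p0 : ℝ := -(x₁ * x₂ * x₃) with hp0
  set p1 : ℝ := x₁ * x₂ + x₁ * x₃ + x₂ * x₃ with hp1
  set p2 : ℝ := -(x₁ + x₂ + x₃) with hp2
  -- entries of the Bezout matrix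
  set b00 : ℝ := p1 * q0 - p0 * q1 with hb00
  set b01 : ℝ := p2 * q0 - p0 * q2 with hb01
  set b02 : ℝ := q0 - p0 * q3 with hb02
  set b11 : ℝ := q0 - p0 * q3 + p2 * q1 - p1 * q2 with hb11
  set b12 : ℝ := q1 - p1 * q3 with hb12
  set b22 : ℝ := q2 - p2 * q3 with hb22
  set B : Polynomial (Polynomial ℝ) :=
      C (C b00 + C b01 * X + C b02 * X ^ 2) +
      C (C b01 + C b11 * X + C b12 * X ^ 2) * X +
      C (C b02 + C b12 * X + C b22 * X ^ 2) * X ^ 2 with hB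
  have key : (X - C X) * B = P.map C * C Q - C P * Q.map C := by
    rw [hP, hQd, hB, hb00, hb01, hb02, hb11, hb12, hb22, hp0, hp1, hp2]
    simp only [Polynomial.map_mul, Polynomial.map_add, Polynomial.map_sub,
      Polynomial.map_pow, Polynomial.map_X, Polynomial.map_C, map_add, map_sub,
      map_mul, map_pow, map_neg]
    ring
  have hBez : bezPoly P Q = B := by
    rw [bezPoly, ← key, mul_divByMonic_cancel_left _ (monic_X_sub_C (X : ℝ[X]))]
  have e00 : bezMat 3 P Q 0 0 = b00 := by
    simp only [bezMat, hBez, hB, Fin.isValue, Fin.val_zero, Fin.val_one, Fin.val_two,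
      coeff_add, coeff_C_mul, coeff_X_pow, coeff_X, coeff_C]
    norm_num
  have e01 : bezMat 3 P Q 0 1 = b01 := by
    simp only [bezMat, hBez, hB, Fin.isValue, Fin.val_zero, Fin.val_one, Fin.val_two,
      coeff_add, coeff_C_mul, coeff_X_pow, coeff_X, coeff_C]
    norm_num
  have e02 : bezMat 3 P Q 0 2 = b02 := by
    simp only [bezMat, hBez, hB, Fin.isValue, Fin.val_zero, Fin.val_one, Fin.val_two,
      coeff_add, coeff_C_mul, coeff_X_pow, coeff_X, coeff_C]
    norm_num
  have e10 : bezMat 3 P Q 1 0 = b01 := by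
    simp only [bezMat, hBez, hB, Fin.isValue, Fin.val_zero, Fin.val_one, Fin.val_two,
      coeff_add, coeff_C_mul, coeff_X_pow, coeff_X, coeff_C]
    norm_num
  have e11 : bezMat 3 P Q 1 1 = b11 := by
    simp only [bezMat, hBez, hB, Fin.isValue, Fin.val_zero, Fin.val_one, Fin.val_two,
      coeff_add, coeff_C_mul, coeff_X_pow, coeff_X, coeff_C]
    norm_num
  have e12 : bezMat 3 P Q 1 2 = b12 := by
    simp only [bezMat, hBez, hB, Fin.isValue, Fin.val_zero, Fin.val_one, Fin.val_two,
      coeff_add, coeff_C_mul, coeff_X_pow, coeff_X, coeff_C]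
    norm_num
  have e20 : bezMat 3 P Q 2 0 = b02 := by
    simp only [bezMat, hBez, hB, Fin.isValue, Fin.val_zero, Fin.val_one, Fin.val_two,
      coeff_add, coeff_C_mul, coeff_X_pow, coeff_X, coeff_C]
    norm_num
  have e21 : bezMat 3 P Q 2 1 = b12 := by
    simp only [bezMat, hBez, hB, Fin.isValue, Fin.val_zero, Fin.val_one, Fin.val_two,
      coeff_add, coeff_C_mul, coeff_X_pow, coeff_X, coeff_C]
    norm_num
  have e22 : bezMat 3 P Q 2 2 = b22 := by
    simp only [bezMat, hBez, hB, Fin.isValue, Fin.val_zero, Fin.val_one, Fin.val_two,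
      coeff_add, coeff_C_mul, coeff_X_pow, coeff_X, coeff_C]
    norm_num
  have hdet : (bezMat 3 P Q).det =
      b00 * (b11 * b22 - b12 * b12) - b01 * (b01 * b22 - b12 * b02) +
        b02 * (b01 * b12 - b11 * b02) := by
    rw [Matrix.det_fin_three, e00, e01, e02, e10, e11, e12, e20, e21, e22]; ring
  have hev1 : Q.eval x₁ = q0 + q1 * x₁ + q2 * x₁ ^ 2 + q3 * x₁ ^ 3 := by
    rw [hQd]; simp
  have hev2 : Q.eval x₂ = q0 + q1 * x₂ + q2 * x₂ ^ 2 + q3 * x₂ ^ 3 := by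
    rw [hQd]; simp
  have hev3 : Q.eval x₃ = q0 + q1 * x₃ + q2 * x₃ ^ 2 + q3 * x₃ ^ 3 := by
    rw [hQd]; simp
  have goal2 : (bezMat 3 P Q).det = -(Q.eval x₁ * Q.eval x₂ * Q.eval x₃) := by
    rw [hdet, hev1, hev2, hev3, hb00, hb01, hb02, hb11, hb12, hb22, hp0, hp1, hp2]
    ring
  refine ⟨?_, goal2⟩
  have d12 : x₂ - x₁ ≠ 0 := sub_ne_zero.mpr (Ne.symm h12)
  have d23 : x₃ - x₂ ≠ 0 := sub_ne_zero.mpr (Ne.symm h23)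
  have d13 : x₃ - x₁ ≠ 0 := sub_ne_zero.mpr (Ne.symm h13)
  rw [goal2, Matrix.det_fin_three]
  simp only [dd, Matrix.of_apply, Matrix.cons_val', Matrix.cons_val_zero, Matrix.cons_val_one,
    Matrix.head_cons, Matrix.empty_val', Matrix.cons_val_fin_one, Matrix.head_fin_const,
    Matrix.cons_val_two, Matrix.tail_cons, List.dropLast, List.getLast]
  field_simp
  ring
end
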